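/- Every graph automorphism of Γ₈ maps the edge set of the hexagonal cycle K = a₁a₂a₃b₁b₂b₃a₁ (namely {a₁a₂, a₂a₃, a₃b₁, b₁b₂, b₂b₃, b₃a₁}) onto itself. -/

import Mathlib

/-!
Graph isomorphisms preserve degrees. In `Γ₈` the vertices `v₁, v₂` have degree 2 and all others
degree 3, so the edges between degree-3 vertices are the hexagon edges and the chord `a₃b₃`. The
chord is singled out because `a₃` and `b₃` are the only vertices with no neighbour of degree 2.
-/

/-- The vertices of the graph `Γ₈`. -/
inductive V8 : Type
  | v1 | v2 | a1 | a2 | a3 | b1 | b2 | b3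
  deriving DecidableEq

open V8

/-- The graph `Γ₈`: the hexagonal cycle `a₁a₂a₃b₁b₂b₃a₁`, the chord `a₃b₃`,
and the four edges `a₁v₁`, `v₁b₁`, `a₂v₂`, `v₂b₂`. -/
def Gamma8 : SimpleGraph V8 :=
  SimpleGraph.fromEdgeSet
    {s(a1, a2), s(a2, a3), s(a3, b1), s(b1, b2), s(b2, b3), s(b3, a1),
     s(a3, b3),
     s(a1, v1), s(v1, b1), s(a2, v2), s(v2, b2)}

/-- The edge set of the hexagonal cycle `K = a₁a₂a₃b₁b₂b₃a₁` in `Γ₈`. -/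
def hexEdges8 : Set (Sym2 V8) :=
  {s(a1, a2), s(a2, a3), s(a3, b1), s(b1, b2), s(b2, b3), s(b3, a1)}

namespace SimpleGraph

variable {V W : Type*} {G : SimpleGraph V} {G' : SimpleGraph W}

theorem Iso.degree_apply (f : G ≃g G') (v : V) [Fintype (G.neighborSet v)]
    [Fintype (G'.neighborSet (f v))] : G'.degree (f v) = G.degree v := by
  simp only [← card_neighborSet_eq_degree]
  exact (Fintype.card_congr (f.mapNeighborSet v)).symm

def IsCubicEdgeNearDegreeTwo (G : SimpleGraph V) [G.LocallyFinite] (u w : V) : Prop :=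
  G.Adj u w ∧ G.degree u = 3 ∧ G.degree w = 3 ∧
    ∃ x, (G.Adj u x ∨ G.Adj w x) ∧ G.degree x = 2

theorem Iso.isCubicEdgeNearDegreeTwo_apply [G.LocallyFinite] [G'.LocallyFinite] (f : G ≃g G')
    {u w : V} (h : G.IsCubicEdgeNearDegreeTwo u w) : G'.IsCubicEdgeNearDegreeTwo (f u) (f w) := by
  obtain ⟨huw, hu, hw, x, hx, hx2⟩ := h
  refine ⟨f.map_adj_iff.mpr huw, ?_, ?_, f x, ?_, ?_⟩
  · rwa [f.degree_apply]
  · rwa [f.degree_apply]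
  · simpa only [f.map_adj_iff] using hx
  · rwa [f.degree_apply]

end SimpleGraph

instance : Fintype V8 :=
  ⟨{v1, v2, a1, a2, a3, b1, b2, b3}, fun x => by cases x <;> decide⟩

instance : DecidableRel Gamma8.Adj := by
  unfold Gamma8; infer_instance

theorem mem_hexEdges8_iff :
    ∀ u w : V8, s(u, w) ∈ hexEdges8 ↔ Gamma8.IsCubicEdgeNearDegreeTwo u w := by
  unfold hexEdges8 SimpleGraph.IsCubicEdgeNearDegreeTwo
  decide

/-- Every graph automorphism of `Γ₈` maps the edge set of the hexagonal cycle
`K = a₁a₂a₃b₁b₂b₃a₁` onto itself: `{φ(u), φ(w)} ∈ K` for every edge `{u, w}` of `K`. -/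
theorem automorphism_of_Gamma8_preserves_hexagon (φ : Gamma8 ≃g Gamma8) :
    ∀ u w : V8, s(u, w) ∈ hexEdges8 → s(φ u, φ w) ∈ hexEdges8 := by
  intro u w huw
  rw [mem_hexEdges8_iff] at huw ⊢
  exact φ.isCubicEdgeNearDegreeTwo_apply huw
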